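/- Let A be an invertible n×n real matrix with rows a₁,…,aₙ, and let x ∈ ℝⁿ with ‖x‖ = 1. Then the expected inner product after one random reflection satisfies E⟨Rx, x⟩ = 1 − (2/‖A‖_F²)·‖Ax‖²; in particular, since ⟨R_i x, x⟩ ≤ 1 for each i, for any ε > 0 the total probability of indices i with ⟨R_i x, x⟩ < 1 − ε is at most (2/ε)·‖Ax‖²/‖A‖_F². -/

import Mathlib

open scoped RealInnerProductSpace
open Finset

/-- The `i`-th row of the matrix `A`, viewed as a vector in Euclidean space. -/
noncomputable def row {n : ℕ} (A : Matrix (Fin n) (Fin n) ℝ) (i : Fin n) :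
    EuclideanSpace ℝ (Fin n) := (WithLp.equiv 2 (Fin n → ℝ)).symm (A i)

/-- View a plain vector as an element of Euclidean space. -/
noncomputable def toE {n : ℕ} (v : Fin n → ℝ) : EuclideanSpace ℝ (Fin n) :=
  (WithLp.equiv 2 (Fin n → ℝ)).symm v

/-- View an element of Euclidean space as a plain vector. -/
noncomputable def ofE {n : ℕ} (v : EuclideanSpace ℝ (Fin n)) : Fin n → ℝ :=
  WithLp.equiv 2 (Fin n → ℝ) v

/-- The squared Frobenius norm `‖A‖_F²` of a matrix. -/
def frobSq {n : ℕ} (A : Matrix (Fin n) (Fin n) ℝ) : ℝ := ∑ i, ∑ j, (A i j) ^ 2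

/-- The ℓ² operator norm of a matrix. -/
noncomputable def opNorm {n : ℕ} (A : Matrix (Fin n) (Fin n) ℝ) : ℝ :=
  ‖Matrix.toEuclideanCLM (𝕜 := ℝ) A‖

/-- The reflection `R_i x = x − 2·(⟨x, a_i⟩/‖a_i‖²)·a_i` through the hyperplane
`{y : ⟨a_i, y⟩ = 0}`, where `a_i` is the `i`-th row of `A`. -/
noncomputable def reflRow {n : ℕ} (A : Matrix (Fin n) (Fin n) ℝ) (i : Fin n)
    (x : EuclideanSpace ℝ (Fin n)) : EuclideanSpace ℝ (Fin n) :=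
  x - (2 * (⟪x, row A i⟫ / ‖row A i‖ ^ 2)) • row A i

/-- `applySeq A k is x = (R_{i_k} ∘ ⋯ ∘ R_{i_1}) x` for the index sequence `is`. -/
noncomputable def applySeq {n : ℕ} (A : Matrix (Fin n) (Fin n) ℝ) :
    (k : ℕ) → (Fin k → Fin n) → EuclideanSpace ℝ (Fin n) → EuclideanSpace ℝ (Fin n)
  | 0, _, x => x
  | k + 1, is, x => reflRow A (is (Fin.last k)) (applySeq A k (fun j => is j.castSucc) x)

lemma row_norm_sq {n : ℕ} (A : Matrix (Fin n) (Fin n) ℝ) (i : Fin n) :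
    ‖row A i‖ ^ 2 = ∑ j, (A i j) ^ 2 := by
  rw [EuclideanSpace.norm_eq, Real.sq_sqrt (by positivity)]
  simp [row, sq_abs]

lemma inner_row {n : ℕ} (A : Matrix (Fin n) (Fin n) ℝ) (x : EuclideanSpace ℝ (Fin n))
    (i : Fin n) : ⟪x, row A i⟫ = A.mulVec (ofE x) i := by
  simp [row, ofE, PiLp.inner_apply, Matrix.mulVec, dotProduct, mul_comm]

lemma normAx_sq {n : ℕ} (A : Matrix (Fin n) (Fin n) ℝ) (x : EuclideanSpace ℝ (Fin n)) :
    ‖toE (A.mulVec (ofE x))‖ ^ 2 = ∑ i, ⟪x, row A i⟫ ^ 2 := by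
  rw [EuclideanSpace.norm_eq, Real.sq_sqrt (by positivity)]
  simp only [toE, WithLp.equiv_symm_apply, PiLp.toLp_apply, sq_abs]
  exact Finset.sum_congr rfl fun i _ => by rw [Real.norm_eq_abs, sq_abs, ← inner_row]

lemma row_ne_zero {n : ℕ} (A : Matrix (Fin n) (Fin n) ℝ) (hA : IsUnit A) (i : Fin n) :
    ‖row A i‖ ≠ 0 := by
  intro h
  have h0 : A i = 0 := by
    have := norm_eq_zero.mp h
    simpa [row] using congrArg (WithLp.equiv 2 (Fin n → ℝ)) this
  have hd : A.det = 0 := Matrix.det_eq_zero_of_row_eq_zero i (fun j => by simp [h0])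
  have := hA.map (Matrix.detMonoidHom (n := Fin n) (R := ℝ))
  rw [Matrix.coe_detMonoidHom] at this
  rw [hd] at this
  exact not_isUnit_zero this

lemma refl_inner {n : ℕ} (A : Matrix (Fin n) (Fin n) ℝ) (hA : IsUnit A)
    (x : EuclideanSpace ℝ (Fin n)) (hx : ‖x‖ = 1) (i : Fin n) :
    ⟪reflRow A i x, x⟫ = 1 - 2 * ⟪x, row A i⟫ ^ 2 / ‖row A i‖ ^ 2 := by
  have hr := row_ne_zero A hA i
  rw [reflRow, inner_sub_left, real_inner_smul_left, real_inner_comm (row A i) x,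
    real_inner_self_eq_norm_sq, hx]
  field_simp

/-- Proposition 2: for `‖x‖ = 1`, the expectation `E⟨Rx, x⟩` equals
`1 − (2/‖A‖_F²)·‖Ax‖²`, and by Markov's inequality, the total probability of the indices
`i` for which `⟨R_i x, x⟩ < 1 − ε` is at most `(2/ε)·‖Ax‖²/‖A‖_F²`. -/
theorem expected_inner_and_markov {n : ℕ} (A : Matrix (Fin n) (Fin n) ℝ)
    (hA : IsUnit A) (x : EuclideanSpace ℝ (Fin n)) (hx : ‖x‖ = 1) (ε : ℝ) (hε : 0 < ε) :
    (∑ i, (‖row A i‖ ^ 2 / frobSq A) * ⟪reflRow A i x, x⟫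
        = 1 - (2 / frobSq A) * ‖toE (A.mulVec (ofE x))‖ ^ 2) ∧
      ∑ i ∈ Finset.univ.filter (fun i => ⟪reflRow A i x, x⟫ < 1 - ε),
          ‖row A i‖ ^ 2 / frobSq A
        ≤ (2 / ε) * ‖toE (A.mulVec (ofE x))‖ ^ 2 / frobSq A := by
  have hn : 0 < n := by
    rcases Nat.eq_zero_or_pos n with h | h
    · exfalso; subst h
      have : x = 0 := Subsingleton.elim x 0
      rw [this, norm_zero] at hx; norm_num at hx
    · exact h
  have hFrow : frobSq A = ∑ i, ‖row A i‖ ^ 2 := by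
    simp [frobSq, row_norm_sq]
  have hF : 0 < frobSq A := by
    rw [hFrow]
    have i0 : Fin n := ⟨0, hn⟩
    apply Finset.sum_pos' (fun i _ => by positivity)
    exact ⟨i0, Finset.mem_univ i0, by
      have := row_ne_zero A hA i0
      positivity⟩
  constructor
  · have : ∀ i : Fin n, (‖row A i‖ ^ 2 / frobSq A) * ⟪reflRow A i x, x⟫
        = ‖row A i‖ ^ 2 / frobSq A - (2 / frobSq A) * ⟪x, row A i⟫ ^ 2 := by
      intro i
      have hr := row_ne_zero A hA i
      rw [refl_inner A hA x hx i]
      field_simp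
    rw [Finset.sum_congr rfl (fun i _ => this i), Finset.sum_sub_distrib,
      ← Finset.sum_div, ← hFrow, div_self hF.ne', ← Finset.mul_sum, normAx_sq]
  · have key : ∀ i ∈ Finset.univ.filter (fun i => ⟪reflRow A i x, x⟫ < 1 - ε),
        ‖row A i‖ ^ 2 / frobSq A ≤ (2 / ε) * ⟪x, row A i⟫ ^ 2 / frobSq A := by
      intro i hi
      rw [Finset.mem_filter] at hi
      have hr := row_ne_zero A hA i
      have hrpos : (0:ℝ) < ‖row A i‖ ^ 2 := by positivity
      have h1 : 2 * ⟪x, row A i⟫ ^ 2 / ‖row A i‖ ^ 2 > ε := by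
        have := refl_inner A hA x hx i
        rw [this] at hi
        linarith [hi.2]
      have h2 : ε * ‖row A i‖ ^ 2 < 2 * ⟪x, row A i⟫ ^ 2 := by
        rw [gt_iff_lt, lt_div_iff₀ hrpos] at h1
        linarith
      rw [div_le_div_iff₀ hF hF]
      have : ‖row A i‖ ^ 2 * ε ≤ 2 * ⟪x, row A i⟫ ^ 2 := by linarith
      have h3 : ‖row A i‖ ^ 2 ≤ 2 / ε * ⟪x, row A i⟫ ^ 2 := by
        rw [div_mul_eq_mul_div, le_div_iff₀ hε]; linarith
      nlinarith [hF]
    calc ∑ i ∈ Finset.univ.filter (fun i => ⟪reflRow A i x, x⟫ < 1 - ε),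
          ‖row A i‖ ^ 2 / frobSq A
        ≤ ∑ i ∈ Finset.univ.filter (fun i => ⟪reflRow A i x, x⟫ < 1 - ε),
          (2 / ε) * ⟪x, row A i⟫ ^ 2 / frobSq A := Finset.sum_le_sum key
      _ ≤ ∑ i, (2 / ε) * ⟪x, row A i⟫ ^ 2 / frobSq A := by
          apply Finset.sum_le_sum_of_subset_of_nonneg (Finset.filter_subset _ _)
          intro i _ _; positivity
      _ = (2 / ε) * ‖toE (A.mulVec (ofE x))‖ ^ 2 / frobSq A := by
          rw [normAx_sq, Finset.mul_sum, Finset.sum_div]
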